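/- arXiv:1910.02110 — 8 statements merged into one kernel-verified Lean document; each statement's English description precedes it below -/
import Mathlib

section
/- Let S be a set of admissible states, e a positive integer, w : S → ℝ^e (entropy variables), ψ : S → ℝ (flux potential), and f : S × S → ℝ^e a two-point flux function that is symmetric, i.e. f(a,b) = f(b,a) for all a,b ∈ S, and satisfies Tadmor's shuffle condition (w(a) − w(b)) · f(a,b) = ψ(a) − ψ(b) for all a,b ∈ S, where · is the Euclidean dot product on ℝ^e. Let Ā be a real N_κ × N_r matrix and let q^κ : {1,…,N_κ} → S and q^r : {1,…,N_r} → S be nodal states. Then Σ_{i=1}^{N_κ} Σ_{j=1}^{N_r} Ā_{ij} ( w(q^κ_i) · f(q^κ_i, q^r_j) ) − Σ_{i=1}^{N_κ} Σ_{j=1}^{N_r} Ā_{ij} ( f(q^κ_i, q^r_j) · w(q^r_j) ) = Σ_{i=1}^{N_κ} Σ_{j=1}^{N_r} Ā_{ij} ( ψ(q^κ_i) − ψ(q^r_j) ); equivalently, writing ψ^κ = (ψ(q^κ_1),…,ψ(q^κ_{N_κ})) and ψ^r = (ψ(q^r_1),…,ψ(q^r_{N_r})), the left-hand side equals (ψ^κ)ᵀ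 Ā 1 − 1ᵀ Ā ψ^r. -/
open Matrix

/-- Telescoping identity for Hadamard-form discretizations built from a symmetric
two-point flux function satisfying Tadmor's shuffle condition. -/
theorem entropy_telescoping_identity
    {S : Type*} (e Nκ Nr : ℕ) (he : 0 < e)
    (w : S → Fin e → ℝ) (ψ : S → ℝ) (f : S → S → Fin e → ℝ)
    (hsym : ∀ a b : S, f a b = f b a)
    (hshuffle : ∀ a b : S, (∑ k, (w a k - w b k) * f a b k) = ψ a - ψ b)
    (A : Matrix (Fin Nκ) (Fin Nr) ℝ)
    (qκ : Fin Nκ → S) (qr : Fin Nr → S) :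
    (∑ i, ∑ j, A i j * (∑ k, w (qκ i) k * f (qκ i) (qr j) k))
      - (∑ i, ∑ j, A i j * (∑ k, f (qκ i) (qr j) k * w (qr j) k))
      = ∑ i, ∑ j, A i j * (ψ (qκ i) - ψ (qr j)) ∧
    (∑ i, ∑ j, A i j * (∑ k, w (qκ i) k * f (qκ i) (qr j) k))
      - (∑ i, ∑ j, A i j * (∑ k, f (qκ i) (qr j) k * w (qr j) k))
      = (fun i => ψ (qκ i)) ⬝ᵥ (A *ᵥ fun _ => (1 : ℝ))
        - (fun _ => (1 : ℝ)) ⬝ᵥ (A *ᵥ fun j => ψ (qr j)) := by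
  have h1 : (∑ i, ∑ j, A i j * (∑ k, w (qκ i) k * f (qκ i) (qr j) k))
      - (∑ i, ∑ j, A i j * (∑ k, f (qκ i) (qr j) k * w (qr j) k))
      = ∑ i, ∑ j, A i j * (ψ (qκ i) - ψ (qr j)) := by
    rw [← Finset.sum_sub_distrib]
    refine Finset.sum_congr rfl fun i _ => ?_
    rw [← Finset.sum_sub_distrib]
    refine Finset.sum_congr rfl fun j _ => ?_
    rw [← mul_sub, ← hshuffle (qκ i) (qr j)]
    congr 1
    rw [← Finset.sum_sub_distrib]
    exact Finset.sum_congr rfl fun k _ => by ring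
  refine ⟨h1, h1.trans ?_⟩
  simp only [dotProduct, mulVec, dotProduct, mul_one, one_mul, Finset.mul_sum,
    mul_sub, Finset.sum_sub_distrib]

  simp [mul_comm]
end

section
/- Let N ≥ 2 and let P be a real N × N diagonal matrix with positive diagonal entries, Q a real N × N matrix satisfying the summation-by-parts relation Q + Qᵀ = E, where E is the N × N matrix whose only nonzero entries are E_{NN} = 1 and E_{11} = −1, and set D = P⁻¹ Q. Suppose u : ℝ → ℝ^N is differentiable and satisfies the semi-discrete split-form viscous Burgers scheme du/dt + (1/3) D (u ∘ u) + (1/3) u ∘ (D u) = D (D u), where ∘ is the entrywise product. Then for every t, (d/dt) [ (1/2) u(t)ᵀ P u(t) ] + (1/3) ( u_N(t)³ − u_1(t)³ ) = u(t)ᵀ E (D u(t)) − (D u(t))ᵀ P (D u(t)). -/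
/-!
Since `P` is diagonal and invertible, `P D = Q`, so pairing the scheme with `P u` turns every
spatial term into a `Q`-form. By `Q + Qᵀ = E`, the viscous term `uᵀ Q D u` is the boundary term
`uᵀ E D u` minus `(D u)ᵀ P (D u)`. For the convective terms, a diagonal `P` commutes with the
entrywise product, so `uᵀ P (u ∘ D u) = (u ∘ u)ᵀ Q u`; with equal weights the two convective
terms add up to `(1/3) uᵀ E (u ∘ u) = (1/3) (u_N³ - u_1³)`.
-/

open Matrix

section

variable {ι : Type*} [Fintype ι]

theorem HasDerivAt.dotProduct {u v : ℝ → ι → ℝ} {u' v' : ι → ℝ} {t : ℝ}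
    (hu : HasDerivAt u u' t) (hv : HasDerivAt v v' t) :
    HasDerivAt (fun s => u s ⬝ᵥ v s) (u' ⬝ᵥ v t + u t ⬝ᵥ v') t := by
  have hu' := hasDerivAt_pi.mp hu
  have hv' := hasDerivAt_pi.mp hv
  have := HasDerivAt.fun_sum (u := Finset.univ) fun i _ => (hu' i).fun_mul (hv' i)
  rw [Finset.sum_add_distrib] at this
  exact this

theorem HasDerivAt.mulVec {u : ℝ → ι → ℝ} {u' : ι → ℝ} {t : ℝ} (A : Matrix ι ι ℝ)
    (hu : HasDerivAt u u' t) : HasDerivAt (fun s => A *ᵥ u s) (A *ᵥ u') t :=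
  hasDerivAt_pi.mpr fun i => by
    have := (hasDerivAt_const t (A i)).dotProduct hu
    rw [zero_dotProduct, zero_add] at this
    exact this

theorem HasDerivAt.dotProduct_mulVec_self {u : ℝ → ι → ℝ} {u' : ι → ℝ} {t : ℝ}
    {A : Matrix ι ι ℝ} (hA : A.IsSymm) (hu : HasDerivAt u u' t) :
    HasDerivAt (fun s => u s ⬝ᵥ (A *ᵥ u s)) (2 * (u t ⬝ᵥ (A *ᵥ u'))) t := by
  convert hu.dotProduct (hu.mulVec A) using 1
  rw [dotProduct_mulVec, ← mulVec_transpose, hA.eq, dotProduct_comm]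
  ring

end

section

variable {ι R : Type*} [Fintype ι] [CommRing R]

theorem dotProduct_mulVec_add_dotProduct_mulVec_of_add_transpose_eq {Q E : Matrix ι ι R}
    (hQ : Q + Qᵀ = E) (v w : ι → R) : v ⬝ᵥ (Q *ᵥ w) + w ⬝ᵥ (Q *ᵥ v) = v ⬝ᵥ (E *ᵥ w) := by
  rw [dotProduct_comm w, ← vecMul_transpose Q v, ← dotProduct_mulVec v Qᵀ w, ← dotProduct_add,
    ← add_mulVec, hQ]

variable [DecidableEq ι]

theorem dotProduct_diagonal_mulVec_mul (d v w : ι → R) :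
    v ⬝ᵥ (diagonal d *ᵥ (v * w)) = (v * v) ⬝ᵥ (diagonal d *ᵥ w) := by
  simp only [dotProduct, mulVec_diagonal, Pi.mul_apply]
  exact Finset.sum_congr rfl fun i _ => by ring

theorem dotProduct_single_one_mulVec (a : ι) (v w : ι → R) :
    v ⬝ᵥ (single a a (1 : R) *ᵥ w) = v a * w a := by
  rw [single_mulVec, one_mul]
  exact dotProduct_single _ _ _

theorem dotProduct_diagonal_mulVec_split_form {d : ι → R} {Q E D : Matrix ι ι R}
    (hQ : Q + Qᵀ = E) (hPD : diagonal d * D = Q) (c : R) (u : ι → R) :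
    u ⬝ᵥ (diagonal d *ᵥ (D *ᵥ (D *ᵥ u) - c • (D *ᵥ (u * u)) - c • (u * (D *ᵥ u))))
      = u ⬝ᵥ (E *ᵥ (D *ᵥ u)) - (D *ᵥ u) ⬝ᵥ (diagonal d *ᵥ (D *ᵥ u))
        - c * (u ⬝ᵥ (E *ᵥ (u * u))) := by
  have hPDv : ∀ v, diagonal d *ᵥ (D *ᵥ v) = Q *ᵥ v := fun v => by rw [mulVec_mulVec, hPD]
  have hviscous := dotProduct_mulVec_add_dotProduct_mulVec_of_add_transpose_eq hQ u (D *ᵥ u)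
  have hconvective := dotProduct_mulVec_add_dotProduct_mulVec_of_add_transpose_eq hQ u (u * u)
  rw [mulVec_sub, mulVec_sub, mulVec_smul, mulVec_smul, dotProduct_sub, dotProduct_sub,
    dotProduct_smul, dotProduct_smul, smul_eq_mul, smul_eq_mul, hPDv, hPDv, hPDv,
    dotProduct_diagonal_mulVec_mul, hPDv, ← hviscous, ← hconvective]
  ring

end

/-- Discrete energy (entropy) identity for the semi-discrete split-form viscous Burgers
scheme built from a diagonal-norm summation-by-parts operator D = P⁻¹ Q with
Q + Qᵀ = E = e_N e_Nᵀ − e_1 e_1ᵀ.  Here the number of nodes is N = n + 2 ≥ 2. -/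
theorem sbp_burgers_energy_identity
    (n : ℕ)
    (dP : Fin (n + 2) → ℝ) (hdP : ∀ i, 0 < dP i)
    (P : Matrix (Fin (n + 2)) (Fin (n + 2)) ℝ) (hP : P = Matrix.diagonal dP)
    (Q E D : Matrix (Fin (n + 2)) (Fin (n + 2)) ℝ)
    (hE : E = Matrix.single (Fin.last (n + 1)) (Fin.last (n + 1)) (1 : ℝ)
            - Matrix.single 0 0 (1 : ℝ))
    (hQ : Q + Qᵀ = E)
    (hD : D = P⁻¹ * Q)
    (u : ℝ → Fin (n + 2) → ℝ) (hu : Differentiable ℝ u)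
    (hscheme : ∀ t, deriv u t + (1 / 3 : ℝ) • (D *ᵥ (u t * u t))
        + (1 / 3 : ℝ) • (u t * (D *ᵥ u t)) = D *ᵥ (D *ᵥ u t))
    (t : ℝ) :
    deriv (fun s => (1 / 2 : ℝ) * (u s ⬝ᵥ (P *ᵥ u s))) t
      + (1 / 3 : ℝ) * ((u t (Fin.last (n + 1))) ^ 3 - (u t 0) ^ 3)
      = u t ⬝ᵥ (E *ᵥ (D *ᵥ u t)) - (D *ᵥ u t) ⬝ᵥ (P *ᵥ (D *ᵥ u t)) := by
  subst hP
  have hPD : diagonal dP * D = Q := by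
    have hdet : IsUnit (diagonal dP).det := (isUnit_iff_isUnit_det _).mp <|
      isUnit_diagonal.mpr <| Pi.isUnit_iff.mpr fun i => (hdP i).ne'.isUnit
    rw [hD, mul_nonsing_inv_cancel_left _ _ hdet]
  have hu' : deriv u t = D *ᵥ (D *ᵥ u t) - (1 / 3 : ℝ) • (D *ᵥ (u t * u t))
      - (1 / 3 : ℝ) • (u t * (D *ᵥ u t)) := by
    rw [← hscheme t]; abel
  have henergy : deriv (fun s => (1 / 2 : ℝ) * (u s ⬝ᵥ (diagonal dP *ᵥ u s))) t
      = u t ⬝ᵥ (diagonal dP *ᵥ deriv u t) := by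
    rw [(((hu t).hasDerivAt.dotProduct_mulVec_self (isSymm_diagonal dP)).const_mul _).deriv]
    ring
  have hboundary : u t ⬝ᵥ (E *ᵥ (u t * u t)) = u t (Fin.last (n + 1)) ^ 3 - u t 0 ^ 3 := by
    rw [hE, sub_mulVec, dotProduct_sub, dotProduct_single_one_mulVec,
      dotProduct_single_one_mulVec, Pi.mul_apply, Pi.mul_apply]
    ring
  rw [henergy, hu', dotProduct_diagonal_mulVec_split_form hQ hPD, hboundary]
  ring
end

section
/- Let m_L, m_R be positive integers, e_N ∈ ℝ^{m_L} and e_1 ∈ ℝ^{m_R} arbitrary vectors, and for l = 2, 3 let n_l^L, n_l^R be positive integers, P_l^L real symmetric n_l^L × n_l^L matrices, P_l^R real symmetric n_l^R × n_l^R matrices, I_{L→R}^l real n_l^R × n_l^L matrices, I_{R→L}^l real n_l^L × n_l^R matrices, and Δ_l^L, Δ_l^R nonzero reals. Assume the SBP-preserving relation P_l^L I_{R→L}^l = (Δ_l^R / Δ_l^L) (I_{L→R}^l)ᵀ P_l^R for l = 2, 3. Define S₁₂ = (Δ₂^L Δ₃^L / 4) · (e_N e_1ᵀ) ⊗ (P₂^L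 I_{R→L}^2) ⊗ (P₃^L I_{R→L}^3) and S₂₁ = −(Δ₂^R Δ₃^R / 4) · (e_1 e_Nᵀ) ⊗ (P₂^R I_{L→R}^2) ⊗ (P₃^R I_{L→R}^3), where ⊗ is the Kronecker product. Then S₁₂ = −S₂₁ᵀ. -/
open Matrix Kronecker

/-- Skew-symmetry of the off-diagonal interface coupling blocks of the macro-element
operator at a nonconforming interface: if the one-dimensional interpolation operators
satisfy the SBP-preserving relation P_l^L I_{R→L}^l = (Δ_l^R/Δ_l^L) (I_{L→R}^l)ᵀ P_l^R
with symmetric norm matrices, then S₁₂ = −S₂₁ᵀ. -/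
theorem macro_coupling_blocks_skew
    (mL mR n2L n3L n2R n3R : ℕ)
    (hmL : 0 < mL) (hmR : 0 < mR)
    (hn2L : 0 < n2L) (hn3L : 0 < n3L) (hn2R : 0 < n2R) (hn3R : 0 < n3R)
    (eN : Fin mL → ℝ) (e1 : Fin mR → ℝ)
    (P2L : Matrix (Fin n2L) (Fin n2L) ℝ) (hP2L : P2L.IsSymm)
    (P3L : Matrix (Fin n3L) (Fin n3L) ℝ) (hP3L : P3L.IsSymm)
    (P2R : Matrix (Fin n2R) (Fin n2R) ℝ) (hP2R : P2R.IsSymm)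
    (P3R : Matrix (Fin n3R) (Fin n3R) ℝ) (hP3R : P3R.IsSymm)
    (ILR2 : Matrix (Fin n2R) (Fin n2L) ℝ) (ILR3 : Matrix (Fin n3R) (Fin n3L) ℝ)
    (IRL2 : Matrix (Fin n2L) (Fin n2R) ℝ) (IRL3 : Matrix (Fin n3L) (Fin n3R) ℝ)
    (Δ2L Δ3L Δ2R Δ3R : ℝ)
    (hΔ2L : Δ2L ≠ 0) (hΔ3L : Δ3L ≠ 0) (hΔ2R : Δ2R ≠ 0) (hΔ3R : Δ3R ≠ 0)
    (hsbp2 : P2L * IRL2 = (Δ2R / Δ2L) • (ILR2ᵀ * P2R))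
    (hsbp3 : P3L * IRL3 = (Δ3R / Δ3L) • (ILR3ᵀ * P3R))
    (S12 : Matrix ((Fin mL × Fin n2L) × Fin n3L) ((Fin mR × Fin n2R) × Fin n3R) ℝ)
    (hS12 : S12 = (Δ2L * Δ3L / 4) •
      ((Matrix.vecMulVec eN e1 ⊗ₖ (P2L * IRL2)) ⊗ₖ (P3L * IRL3)))
    (S21 : Matrix ((Fin mR × Fin n2R) × Fin n3R) ((Fin mL × Fin n2L) × Fin n3L) ℝ)
    (hS21 : S21 = (-(Δ2R * Δ3R / 4)) •
      ((Matrix.vecMulVec e1 eN ⊗ₖ (P2R * ILR2)) ⊗ₖ (P3R * ILR3))) :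
    S12 = -S21ᵀ := by
  subst hS12 hS21
  ext ⟨⟨i, k⟩, p⟩ ⟨⟨j, l⟩, q⟩
  have h2 := congrFun (congrFun hsbp2 k) l
  have h3 := congrFun (congrFun hsbp3 p) q
  simp only [Matrix.smul_apply, Matrix.kroneckerMap_apply, Matrix.neg_apply,
    Matrix.transpose_apply, Matrix.vecMulVec_apply, smul_eq_mul] at *
  rw [h2, h3]
  have h2s : (ILR2ᵀ * P2R) k l = (P2R * ILR2) l k := by
    simp [Matrix.mul_apply, mul_comm, hP2R.apply]
  have h3s : (ILR3ᵀ * P3R) p q = (P3R * ILR3) q p := by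
    simp [Matrix.mul_apply, mul_comm, hP3R.apply]
  rw [h2s, h3s]
  field_simp
end

section
/- Let c < d be real numbers, x_1, …, x_{n_L} pairwise distinct reals (the nodes of element L) and y_1, …, y_{n_R} pairwise distinct reals (the nodes of element R). Let ℓ_j^x and ℓ_i^y denote the Lagrange basis polynomials for the nodes x and y respectively, i.e. the unique polynomials of degree n_L − 1 (resp. n_R − 1) with ℓ_j^x(x_k) = δ_{jk} and ℓ_i^y(y_k) = δ_{ik}. Define the matrices M_R(i,j) = ∫_c^d ℓ_i^y(t) ℓ_j^y(t) dt for 1 ≤ i,j ≤ n_R, and M_{LtoR}(i,j) = ∫_c^d ℓ_i^y(t) ℓ_j^x(t) dt for 1 ≤ i ≤ n_R, 1 ≤ j ≤ n_L. Then for every real polynomial p of degree at most min(n_L − 1, n_R − 1), M_R · ( p(y_1), …, p(y_{n_R}) )ᵀ = M_{LtoR} · ( p(x_1), …, p(x_{n_L}) )ᵀ; equivalently, the L² projection interpolation operator I_{L→R} = M_R⁻¹ M_{LtoR} maps the values of p at the nodes x exactly to the values of p at the nodes y, so I_{L→R} is of degree min(n_L − 1, n_R − 1). -/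
open Matrix MeasureTheory intervalIntegral

open Polynomial in
lemma lagrange_rep {n : ℕ} (hn : 0 < n) (z : Fin n → ℝ) (hz : Function.Injective z)
    (ℓ : Fin n → Polynomial ℝ) (hdeg : ∀ i, (ℓ i).degree < (n : ℕ))
    (hℓ : ∀ i k, (ℓ i).eval (z k) = if i = k then 1 else 0)
    (p : Polynomial ℝ) (hpd : p.natDegree ≤ n - 1) :
    p = ∑ k, Polynomial.C (p.eval (z k)) * ℓ k := by
  set q := p - ∑ k, Polynomial.C (p.eval (z k)) * ℓ k with hq
  have hpd' : p.degree < (n : ℕ) := by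
    calc p.degree ≤ (p.natDegree : ℕ) := degree_le_natDegree
    _ < (n : ℕ) := by exact_mod_cast Nat.lt_of_le_of_lt hpd (Nat.sub_lt hn one_pos)
  have hqdeg : q.degree < (n : ℕ) := by
    apply lt_of_le_of_lt (degree_sub_le _ _)
    simp only [max_lt_iff]
    exact ⟨hpd', lt_of_le_of_lt (degree_sum_le _ _) (by
      apply Finset.sup_lt_iff (by exact_mod_cast WithBot.bot_lt_coe n) |>.mpr
      intro k _
      exact lt_of_le_of_lt (degree_mul_le _ _) (by
        rcases eq_or_ne (p.eval (z k)) 0 with h | h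
        · simp [h]
        · rw [degree_C h, zero_add]; exact hdeg k))⟩
  have heval : ∀ k, q.eval (z k) = 0 := by
    intro k
    simp [hq, eval_finset_sum, hℓ, Finset.sum_ite_eq, sub_eq_zero]
  have hq0 : q = 0 := by
    rcases eq_or_ne q 0 with h | h
    · exact h
    · exact Polynomial.eq_zero_of_natDegree_lt_card_of_eval_eq_zero q hz heval
        (by simpa using (natDegree_lt_iff_degree_lt h).mpr hqdeg)
  exact sub_eq_zero.mp (hq ▸ hq0)

open Polynomial in
lemma key_sum {n : ℕ} (c d : ℝ) (z : Fin n → ℝ)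
    (ℓ : Fin n → Polynomial ℝ) (g p : Polynomial ℝ)
    (hrep : p = ∑ k, Polynomial.C (p.eval (z k)) * ℓ k) :
    ∑ j, (∫ t in c..d, g.eval t * (ℓ j).eval t) * p.eval (z j)
      = ∫ t in c..d, g.eval t * p.eval t := by
  have h1 : ∀ j ∈ Finset.univ, IntervalIntegrable
      (fun t => g.eval t * (ℓ j).eval t * p.eval (z j)) volume c d :=
    fun j _ => (Continuous.mul ((g.continuous_aeval).mul ((ℓ j).continuous_aeval))
      continuous_const).intervalIntegrable _ _
  calc ∑ j, (∫ t in c..d, g.eval t * (ℓ j).eval t) * p.eval (z j)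
      = ∑ j, ∫ t in c..d, g.eval t * (ℓ j).eval t * p.eval (z j) := by
        simp [intervalIntegral.integral_mul_const]
    _ = ∫ t in c..d, ∑ j, g.eval t * (ℓ j).eval t * p.eval (z j) :=
        (intervalIntegral.integral_finset_sum h1).symm
    _ = ∫ t in c..d, g.eval t * p.eval t := by
        congr 1; funext t
        conv_rhs => rw [hrep]
        simp [eval_finset_sum, Finset.mul_sum]
        ring_nf
        congr 1; funext j; ring

/-- Accuracy of the L² projection interpolation operator from the nodes x of element L
to the nodes y of element R: for every polynomial p of degree at most
min(n_L − 1, n_R − 1), M_R applied to the values of p at y equals M_{LtoR} applied to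
the values of p at x; i.e. I_{L→R} = M_R⁻¹ M_{LtoR} reproduces p exactly. -/
theorem l2_projection_interpolation_accuracy
    (c d : ℝ) (hcd : c < d) (nL nR : ℕ) (hnL : 0 < nL) (hnR : 0 < nR)
    (x : Fin nL → ℝ) (hx : Function.Injective x)
    (y : Fin nR → ℝ) (hy : Function.Injective y)
    (ℓx : Fin nL → Polynomial ℝ)
    (hℓxdeg : ∀ j, (ℓx j).degree < (nL : ℕ))
    (hℓx : ∀ j k, (ℓx j).eval (x k) = if j = k then 1 else 0)
    (ℓy : Fin nR → Polynomial ℝ)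
    (hℓydeg : ∀ i, (ℓy i).degree < (nR : ℕ))
    (hℓy : ∀ i k, (ℓy i).eval (y k) = if i = k then 1 else 0)
    (MR : Matrix (Fin nR) (Fin nR) ℝ)
    (hMR : ∀ i j, MR i j = ∫ t in c..d, (ℓy i).eval t * (ℓy j).eval t)
    (MLR : Matrix (Fin nR) (Fin nL) ℝ)
    (hMLR : ∀ i j, MLR i j = ∫ t in c..d, (ℓy i).eval t * (ℓx j).eval t)
    (p : Polynomial ℝ) (hp : p.natDegree ≤ min (nL - 1) (nR - 1)) :
    MR *ᵥ (fun i => p.eval (y i)) = MLR *ᵥ (fun j => p.eval (x j)) := by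
  have hrepx := lagrange_rep hnL x hx ℓx hℓxdeg hℓx p (le_trans hp (min_le_left _ _))
  have hrepy := lagrange_rep hnR y hy ℓy hℓydeg hℓy p (le_trans hp (min_le_right _ _))
  funext i
  simp only [mulVec, dotProduct]
  calc ∑ j, MR i j * p.eval (y j)
      = ∫ t in c..d, (ℓy i).eval t * p.eval t := by
        simp only [hMR]; exact key_sum c d y ℓy (ℓy i) p hrepy
    _ = ∑ j, MLR i j * p.eval (x j) := by
        simp only [hMLR]; exact (key_sum c d x ℓx (ℓy i) p hrepx).symm
end

section
/- Let a = a_0 < a_1 < … < a_F = b be a partition of [a,b]. Let x_1, …, x_{n_L} ∈ [a,b] be pairwise distinct nodes with positive weights ω^L_1, …, ω^L_{n_L} forming a quadrature rule on [a,b], and for each f = 1, …, F let y^f_1, …, y^f_{n_f} ∈ [a_{f−1}, a_f] be pairwise distinct nodes with positive weights ω^f_1, …, ω^f_{n_f} forming a quadrature rule on [a_{f−1}, a_f]; here a quadrature rule with nodes z_i and weights w_i is exact of degree τ on [c,d] if Σ_i w_i q(z_i) = ∫_c^d q(t) dt for every polynomial q with deg q ≤ τ. Let d ≥ 0 be an integer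 with d ≤ min(n_L, n_1, …, n_F) − 1, and assume the L-quadrature is exact of degree n_L − 1 + d on [a,b] and, for each f, the f-th quadrature is exact of degree n_f − 1 + d on [a_{f−1}, a_f]. Define, for each f, the L² projection interpolation operator I_{L→R_f} = M_{R_f}⁻¹ M_{LtoR_f}, where M_{R_f}(i,j) = ∫_{a_{f−1}}^{a_f} ℓ_i^{y^f} ℓ_j^{y^f} and M_{LtoR_f}(i,j) = ∫_{a_{f−1}}^{a_f} ℓ_i^{y^f} ℓ_j^{x}, with ℓ^z denoting Lagrange basis polynomials for nodes z, and define I_{R_f→L} = P_L⁻¹ (I_{L→R_f})ᵀ P_{R_f}, where P_L = diag(ω^L) and P_{R_f} = diag(ω^f). Then for every polynomial p with deg p ≤ d, Σ_{f=1}^F I_{R_f→L} · ( p(y^f_1), …, p(y^f_{n_f}) )ᵀ = ( p(x_1), …, p(x_{n_L}) )ᵀ. -/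
/-!
Let `B_f` be the `L²` inner product on `[a_{f-1}, a_f]` and `p_y` the nodal values of `p` at the
`y^f`. Since `p = ∑ p(y_k) ℓ_k` and the refined quadrature is exact on `p ℓ_i`,
`p_yᵀ M_{R_f} = (B_f(p, ℓ_i))_i = (P_{R_f} p_y)ᵀ`; the mass matrix is an invertible Gram matrix,
so `(I_{L→R_f})ᵀ P_{R_f} p_y = M_{LtoR_f}ᵀ p_y = (B_f(p, ℓ^x_j))_j`. Summing over `f` gives the
`L²` inner product on `[a, b]`, which the exact coarse quadrature turns into `P_L p_x`.
-/

open Matrix MeasureTheory intervalIntegral Polynomial Finset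

namespace Matrix

section Bilinear

variable {R M N ι κ : Type*} [CommSemiring R] [AddCommMonoid M] [AddCommMonoid N]
  [Module R M] [Module R N]

theorem vecMul_of_bilin [Fintype ι] (B : M →ₗ[R] N →ₗ[R] R) (ℓ : ι → M) (g : κ → N)
    (v : ι → R) :
    v ᵥ* Matrix.of (fun i j => B (ℓ i) (g j)) = fun j => B (∑ i, v i • ℓ i) (g j) := by
  ext j
  simp [vecMul, dotProduct, map_sum]

theorem mulVec_of_bilin [Fintype κ] (B : M →ₗ[R] N →ₗ[R] R) (ℓ : ι → M) (g : κ → N)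
    (w : κ → R) :
    Matrix.of (fun i j => B (ℓ i) (g j)) *ᵥ w = fun i => B (ℓ i) (∑ j, w j • g j) := by
  ext i
  simp [mulVec, dotProduct, map_sum, mul_comm]

end Bilinear

theorem det_of_bilin_ne_zero {R M ι : Type*} [CommRing R] [IsDomain R] [AddCommGroup M]
    [Module R M] [Fintype ι] [DecidableEq ι] (B : M →ₗ[R] M →ₗ[R] R)
    (hB : ∀ q, B q q = 0 → q = 0) {ℓ : ι → M} (hℓ : LinearIndependent R ℓ) :
    (of fun i j => B (ℓ i) (ℓ j)).det ≠ 0 := by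
  intro hdet
  obtain ⟨v, hv, hMv⟩ := exists_mulVec_eq_zero_iff.mpr hdet
  have hq : B (∑ i, v i • ℓ i) (∑ i, v i • ℓ i) = 0 :=
    calc B (∑ i, v i • ℓ i) (∑ i, v i • ℓ i)
        = v ⬝ᵥ (of (fun i j => B (ℓ i) (ℓ j)) *ᵥ v) := by
          rw [mulVec_of_bilin]
          simp only [dotProduct, map_sum, map_smul, LinearMap.sum_apply, LinearMap.smul_apply,
            smul_eq_mul, Finset.mul_sum]
          rw [Finset.sum_comm]
          simp only [mul_left_comm]
      _ = 0 := by rw [hMv, dotProduct_zero]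
  exact hv (funext (Fintype.linearIndependent_iff.mp hℓ v (hB _ hq)))

end Matrix

theorem intervalIntegral.sum_integral_adjacent_intervals_fin {E : Type*} [NormedAddCommGroup E]
    [NormedSpace ℝ E] {μ : Measure ℝ} {g : ℝ → E} {F : ℕ} {a : Fin (F + 1) → ℝ}
    (hg : ∀ f : Fin F, IntervalIntegrable g μ (a f.castSucc) (a f.succ)) :
    ∑ f : Fin F, ∫ x in a f.castSucc..a f.succ, g x ∂μ = ∫ x in a 0..a (Fin.last F), g x ∂μ := by
  set b : ℕ → ℝ := fun k => a (Fin.clamp k F)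
  have hb : ∀ f : Fin F, b f = a f.castSucc ∧ b (f + 1) = a f.succ := fun f =>
    ⟨congrArg a (Fin.ext (by simp [Fin.clamp, f.2.le])),
      congrArg a (Fin.ext (by simp [Fin.clamp, f.2]))⟩
  have key := sum_integral_adjacent_intervals (μ := μ) (f := g) (a := b) (n := F) fun k hk => by
    simpa [hb ⟨k, hk⟩] using hg ⟨k, hk⟩
  have hb0 : b 0 = a 0 := congrArg a (Fin.ext (by simp [Fin.clamp]))
  have hbF : b F = a (Fin.last F) := congrArg a (Fin.ext (by simp [Fin.clamp]))
  rw [hb0, hbF, ← Fin.sum_univ_eq_sum_range (fun k => ∫ x in b k..b (k + 1), g x ∂μ)] at key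
  simpa [hb] using key

namespace Polynomial

section Lagrange

variable {R ι : Type*} [CommRing R] [DecidableEq ι] {z : ι → R} {ℓ : ι → R[X]}

theorem injective_of_eval_eq_ite [Nontrivial R]
    (hℓ : ∀ i k, (ℓ i).eval (z k) = if i = k then 1 else 0) : Function.Injective z := by
  intro i k hik
  by_contra hne
  have h := hℓ i i
  rw [hik, hℓ i k] at h
  simp [hne] at h

theorem eval_sum_smul_of_eval_eq_ite [Fintype ι]
    (hℓ : ∀ i k, (ℓ i).eval (z k) = if i = k then 1 else 0)
    (v : ι → R) (k : ι) : (∑ i, v i • ℓ i).eval (z k) = v k := by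
  simp [eval_finsetSum, hℓ]

theorem linearIndependent_of_eval_eq_ite [Fintype ι]
    (hℓ : ∀ i k, (ℓ i).eval (z k) = if i = k then 1 else 0) : LinearIndependent R ℓ :=
  Fintype.linearIndependent_iff.mpr fun v hv k => by
    simpa [hv] using (eval_sum_smul_of_eval_eq_ite hℓ v k).symm

theorem eq_sum_eval_smul_of_eval_eq_ite [Fintype ι] [IsDomain R]
    (hℓdeg : ∀ i, (ℓ i).degree < Fintype.card ι)
    (hℓ : ∀ i k, (ℓ i).eval (z k) = if i = k then 1 else 0)
    {p : R[X]} (hp : p.degree < Fintype.card ι) : p = ∑ i, p.eval (z i) • ℓ i := by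
  refine eq_of_degrees_lt_of_eval_index_eq univ (injective_of_eval_eq_ite hℓ).injOn
    (by simpa using hp) ?_ fun k _ =>
    (eval_sum_smul_of_eval_eq_ite hℓ (fun i => p.eval (z i)) k).symm
  rw [card_univ, ← mem_degreeLT]
  exact Submodule.sum_mem _ fun i _ => Submodule.smul_mem _ _ (mem_degreeLT.mpr (hℓdeg i))

theorem sum_mul_eval_mul_of_eval_eq_ite [Fintype ι]
    (hℓ : ∀ i k, (ℓ i).eval (z k) = if i = k then 1 else 0) (w : ι → R) (g : R[X]) (i : ι) :
    ∑ k, w k * (g * ℓ i).eval (z k) = w i * g.eval (z i) := by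
  simp [hℓ]

end Lagrange

noncomputable def intervalInner (c e : ℝ) : ℝ[X] →ₗ[ℝ] ℝ[X] →ₗ[ℝ] ℝ :=
  LinearMap.mk₂ ℝ (fun p q => ∫ t in c..e, p.eval t * q.eval t)
    (fun p₁ p₂ q => by
      simp only [eval_add, add_mul]
      exact integral_add ((p₁.continuous.mul q.continuous).intervalIntegrable _ _)
        ((p₂.continuous.mul q.continuous).intervalIntegrable _ _))
    (fun r p q => by simp only [eval_smul, smul_mul_assoc, intervalIntegral.integral_smul])
    (fun p q₁ q₂ => by
      simp only [eval_add, mul_add]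
      exact integral_add ((p.continuous.mul q₁.continuous).intervalIntegrable _ _)
        ((p.continuous.mul q₂.continuous).intervalIntegrable _ _))
    (fun r p q => by simp only [eval_smul, mul_smul_comm, intervalIntegral.integral_smul])

@[simp]
theorem intervalInner_apply (c e : ℝ) (p q : ℝ[X]) :
    intervalInner c e p q = ∫ t in c..e, p.eval t * q.eval t :=
  rfl

theorem intervalInner_self_pos {c e : ℝ} (hce : c < e) {q : ℝ[X]} (hq : q ≠ 0) :
    0 < intervalInner c e q q := by
  obtain ⟨t, ht, hqt⟩ := ((Set.Icc_infinite hce).sdiff (finite_setOfPred_isRoot hq)).nonempty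
  exact integral_pos hce (q.continuous.mul q.continuous).continuousOn
    (fun _ _ => mul_self_nonneg _) ⟨t, ht, mul_self_pos.mpr hqt⟩

theorem sum_intervalInner_adjacent {F : ℕ} (a : Fin (F + 1) → ℝ) (p q : ℝ[X]) :
    ∑ f : Fin F, intervalInner (a f.castSucc) (a f.succ) p q
      = intervalInner (a 0) (a (Fin.last F)) p q :=
  sum_integral_adjacent_intervals_fin fun _ =>
    (p.continuous.mul q.continuous).intervalIntegrable _ _

theorem intervalInner_eq_weight_mul_eval {ι : Type*} [Fintype ι] [DecidableEq ι] {c e : ℝ}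
    {z w : ι → ℝ} {ℓ : ι → ℝ[X]} {m d : ℕ}
    (hquad : ∀ q : ℝ[X], q.natDegree ≤ m - 1 + d →
      ∑ k, w k * q.eval (z k) = ∫ t in c..e, q.eval t)
    (hℓ : ∀ i k, (ℓ i).eval (z k) = if i = k then 1 else 0)
    {i : ι} (hℓdeg : (ℓ i).degree < m) {g : ℝ[X]} (hg : g.natDegree ≤ d) :
    intervalInner c e g (ℓ i) = w i * g.eval (z i) := by
  have hℓi : (ℓ i).natDegree ≤ m - 1 := by
    rcases eq_or_ne (ℓ i) 0 with h | h
    · simp [h]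
    · have := (natDegree_lt_iff_degree_lt h).mpr hℓdeg
      omega
  rw [← sum_mul_eval_mul_of_eval_eq_ite hℓ, hquad _ (natDegree_mul_le.trans (by omega))]
  simp

theorem transpose_inv_mul_mul_diagonal_mulVec_eval {ι κ : Type*} [Fintype ι] [DecidableEq ι]
    {c e : ℝ} (hce : c < e) {z w : ι → ℝ} {ℓ : ι → ℝ[X]} {g : κ → ℝ[X]} {d : ℕ}
    (hquad : ∀ q : ℝ[X], q.natDegree ≤ Fintype.card ι - 1 + d →
      ∑ k, w k * q.eval (z k) = ∫ t in c..e, q.eval t)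
    (hℓdeg : ∀ i, (ℓ i).degree < Fintype.card ι)
    (hℓ : ∀ i k, (ℓ i).eval (z k) = if i = k then 1 else 0)
    (hd : d + 1 ≤ Fintype.card ι) {p : ℝ[X]} (hp : p.natDegree ≤ d)
    {MR : Matrix ι ι ℝ} (hMR : MR = of fun i k => intervalInner c e (ℓ i) (ℓ k))
    {MLR : Matrix ι κ ℝ} (hMLR : MLR = of fun i j => intervalInner c e (ℓ i) (g j)) :
    ((MR⁻¹ * MLR)ᵀ * diagonal w) *ᵥ (fun i => p.eval (z i))
      = fun j => intervalInner c e p (g j) := by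
  set pz : ι → ℝ := fun i => p.eval (z i)
  have hpz : p = ∑ i, pz i • ℓ i := eq_sum_eval_smul_of_eval_eq_ite hℓdeg hℓ
    (degree_le_natDegree.trans_lt (by exact_mod_cast hp.trans_lt hd))
  have hmass : pz ᵥ* MR = diagonal w *ᵥ pz := by
    ext i
    rw [hMR, vecMul_of_bilin, ← hpz, mulVec_diagonal]
    exact intervalInner_eq_weight_mul_eval hquad hℓ (hℓdeg i) hp
  have hdet : IsUnit MR.det := by
    rw [hMR, isUnit_iff_ne_zero]
    exact det_of_bilin_ne_zero _ (fun q hq => by_contra fun h =>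
      (intervalInner_self_pos hce h).ne' hq) (linearIndependent_of_eval_eq_ite hℓ)
  rw [← mulVec_mulVec, ← hmass, mulVec_transpose, ← vecMul_vecMul, vecMul_vecMul _ MR,
    mul_nonsing_inv _ hdet, vecMul_one, hMLR, vecMul_of_bilin, ← hpz]

end Polynomial

theorem combined_interpolation_accuracy_general
    (F nL : ℕ)
    (a : Fin (F + 1) → ℝ) (ha : StrictMono a)
    (x : Fin nL → ℝ)
    (ωL : Fin nL → ℝ) (hωL : ∀ i, 0 < ωL i)
    (n : Fin F → ℕ)
    (y : (f : Fin F) → Fin (n f) → ℝ)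
    (ω : (f : Fin F) → Fin (n f) → ℝ)
    (d : ℕ) (hdf : ∀ f, d + 1 ≤ n f)
    (hquadL : ∀ q : Polynomial ℝ, q.natDegree ≤ nL - 1 + d →
      ∑ i, ωL i * q.eval (x i) = ∫ t in (a 0)..(a (Fin.last F)), q.eval t)
    (hquadR : ∀ (f : Fin F) (q : Polynomial ℝ), q.natDegree ≤ n f - 1 + d →
      ∑ i, ω f i * q.eval (y f i) = ∫ t in (a f.castSucc)..(a f.succ), q.eval t)
    (ℓx : Fin nL → Polynomial ℝ)
    (hℓxdeg : ∀ j, (ℓx j).degree < (nL : ℕ))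
    (hℓx : ∀ j k, (ℓx j).eval (x k) = if j = k then 1 else 0)
    (ℓy : (f : Fin F) → Fin (n f) → Polynomial ℝ)
    (hℓydeg : ∀ f i, (ℓy f i).degree < (n f : ℕ))
    (hℓy : ∀ f i k, (ℓy f i).eval (y f k) = if i = k then 1 else 0)
    (MR : (f : Fin F) → Matrix (Fin (n f)) (Fin (n f)) ℝ)
    (hMR : ∀ f i j, MR f i j
      = ∫ t in (a f.castSucc)..(a f.succ), (ℓy f i).eval t * (ℓy f j).eval t)
    (MLR : (f : Fin F) → Matrix (Fin (n f)) (Fin nL) ℝ)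
    (hMLR : ∀ f i j, MLR f i j
      = ∫ t in (a f.castSucc)..(a f.succ), (ℓy f i).eval t * (ℓx j).eval t)
    (ILR : (f : Fin F) → Matrix (Fin (n f)) (Fin nL) ℝ)
    (hILR : ∀ f, ILR f = (MR f)⁻¹ * MLR f)
    (IRL : (f : Fin F) → Matrix (Fin nL) (Fin (n f)) ℝ)
    (hIRL : ∀ f, IRL f = (Matrix.diagonal ωL)⁻¹ * (ILR f)ᵀ * Matrix.diagonal (ω f))
    (p : Polynomial ℝ) (hp : p.natDegree ≤ d) :
    ∑ f, (IRL f) *ᵥ (fun i => p.eval (y f i)) = fun j => p.eval (x j) := by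
  have hrefined : ∀ f, IRL f *ᵥ (fun i => p.eval (y f i))
      = (diagonal ωL)⁻¹ *ᵥ fun j => intervalInner (a f.castSucc) (a f.succ) p (ℓx j) :=
    fun f => by
      rw [hIRL, hILR, Matrix.mul_assoc, ← mulVec_mulVec,
        transpose_inv_mul_mul_diagonal_mulVec_eval (g := ℓx) (ha (Fin.castSucc_lt_succ (i := f)))
          (by simpa using hquadR f)
          (by simpa using hℓydeg f) (hℓy f) (by simpa using hdf f) hp
          (by ext; simp [hMR]) (by ext; simp [hMLR])]
  have hcoarse : ∑ f : Fin F, (fun j => intervalInner (a f.castSucc) (a f.succ) p (ℓx j))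
      = diagonal ωL *ᵥ fun j => p.eval (x j) := by
    ext j
    rw [Finset.sum_apply, sum_intervalInner_adjacent, mulVec_diagonal]
    exact intervalInner_eq_weight_mul_eval hquadL hℓx (hℓxdeg j) hp
  have hdetL : IsUnit (diagonal ωL).det := by
    rw [det_diagonal, isUnit_iff_ne_zero]
    exact prod_ne_zero_iff.mpr fun i _ => (hωL i).ne'
  rw [Finset.sum_congr rfl fun f _ => hrefined f, ← mulVec_sum, hcoarse, mulVec_mulVec,
    nonsing_inv_mul _ hdetL, one_mulVec]

/-- Accuracy of the combined interpolation from the refined elements R_1, …, R_F back to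
the coarse element L: with I_{L→R_f} = M_{R_f}⁻¹ M_{LtoR_f} built by L² projection and
I_{R_f→L} = P_L⁻¹ (I_{L→R_f})ᵀ P_{R_f} its SBP-preserving adjoint, the combined action
on the restrictions of a polynomial p of degree at most d to the subinterval nodes
reproduces the values of p at the coarse nodes exactly. -/
theorem combined_interpolation_accuracy
    (F nL : ℕ) (hF : 0 < F) (hnL : 0 < nL)
    (a : Fin (F + 1) → ℝ) (ha : StrictMono a)
    (x : Fin nL → ℝ) (hxmem : ∀ i, x i ∈ Set.Icc (a 0) (a (Fin.last F)))
    (hxinj : Function.Injective x)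
    (ωL : Fin nL → ℝ) (hωL : ∀ i, 0 < ωL i)
    (n : Fin F → ℕ) (hn : ∀ f, 0 < n f)
    (y : (f : Fin F) → Fin (n f) → ℝ)
    (hymem : ∀ f i, y f i ∈ Set.Icc (a f.castSucc) (a f.succ))
    (hyinj : ∀ f, Function.Injective (y f))
    (ω : (f : Fin F) → Fin (n f) → ℝ) (hω : ∀ f i, 0 < ω f i)
    (d : ℕ) (hdL : d + 1 ≤ nL) (hdf : ∀ f, d + 1 ≤ n f)
    (hquadL : ∀ q : Polynomial ℝ, q.natDegree ≤ nL - 1 + d →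
      ∑ i, ωL i * q.eval (x i) = ∫ t in (a 0)..(a (Fin.last F)), q.eval t)
    (hquadR : ∀ (f : Fin F) (q : Polynomial ℝ), q.natDegree ≤ n f - 1 + d →
      ∑ i, ω f i * q.eval (y f i) = ∫ t in (a f.castSucc)..(a f.succ), q.eval t)
    (ℓx : Fin nL → Polynomial ℝ)
    (hℓxdeg : ∀ j, (ℓx j).degree < (nL : ℕ))
    (hℓx : ∀ j k, (ℓx j).eval (x k) = if j = k then 1 else 0)
    (ℓy : (f : Fin F) → Fin (n f) → Polynomial ℝ)
    (hℓydeg : ∀ f i, (ℓy f i).degree < (n f : ℕ))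
    (hℓy : ∀ f i k, (ℓy f i).eval (y f k) = if i = k then 1 else 0)
    (MR : (f : Fin F) → Matrix (Fin (n f)) (Fin (n f)) ℝ)
    (hMR : ∀ f i j, MR f i j
      = ∫ t in (a f.castSucc)..(a f.succ), (ℓy f i).eval t * (ℓy f j).eval t)
    (MLR : (f : Fin F) → Matrix (Fin (n f)) (Fin nL) ℝ)
    (hMLR : ∀ f i j, MLR f i j
      = ∫ t in (a f.castSucc)..(a f.succ), (ℓy f i).eval t * (ℓx j).eval t)
    (ILR : (f : Fin F) → Matrix (Fin (n f)) (Fin nL) ℝ)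
    (hILR : ∀ f, ILR f = (MR f)⁻¹ * MLR f)
    (IRL : (f : Fin F) → Matrix (Fin nL) (Fin (n f)) ℝ)
    (hIRL : ∀ f, IRL f = (Matrix.diagonal ωL)⁻¹ * (ILR f)ᵀ * Matrix.diagonal (ω f))
    (p : Polynomial ℝ) (hp : p.natDegree ≤ d) :
    ∑ f, (IRL f) *ᵥ (fun i => p.eval (y f i)) = fun j => p.eval (x j) :=
  combined_interpolation_accuracy_general F nL a ha x ωL hωL n y ω d hdf hquadL hquadR ℓx hℓxdeg hℓx
    ℓy hℓydeg hℓy MR hMR MLR hMLR ILR hILR IRL hIRL p hp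
end

section
/- Let a = a_0 < a_1 < … < a_F = b be a partition of [a,b]. For each f = 1, …, F let y^f_1, …, y^f_{n_f} be pairwise distinct nodes with positive weights ω^f_1, …, ω^f_{n_f} such that Σ_i ω^f_i q(y^f_i) = ∫_{a_{f−1}}^{a_f} q(t) dt for every polynomial q with deg q ≤ τ_f. Let P_L = diag(ω^L) with positive entries ω^L_1, …, ω^L_{n_L}, and for each f let I_{L→R_f} be a real n_f × n_L matrix with I_{L→R_f} 1 = 1, P_{R_f} = diag(ω^f), and I_{R_f→L} = P_L⁻¹ (I_{L→R_f})ᵀ P_{R_f}. Then for every polynomial g with deg g ≤ min(τ_1, …, τ_F), 1ᵀ P_L Σ_{f=1}^F I_{R_f→L} · ( g(y^f_1), …, g(y^f_{n_f}) )ᵀ = ∫_a^b g(t) dt. In particular, if g is a surface metric term whose exact integral over the closed element surface vanishes, the compatibility constraint 1ᵀ c = 0 of the discrete geometric conservation law system is satisfied. -/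
open Matrix MeasureTheory intervalIntegral

/-- Main metric theorem: if the surface metric term g is a polynomial of degree at most
that of the weakest quadrature rule on the sub-faces of an h-refined interface, then the
discrete surface sum 1ᵀ P_L Σ_f I_{R_f→L} g(y^f) equals the exact integral of g over
the whole face [a,b]; in particular the compatibility constraint 1ᵀ c = 0 of the
discrete geometric conservation law system is satisfied when the exact integral over the
closed element surface vanishes. -/
theorem metric_surface_sum_exact
    (F nL : ℕ) (hF : 0 < F)
    (a : Fin (F + 1) → ℝ) (ha : StrictMono a)
    (n : Fin F → ℕ)
    (y : (f : Fin F) → Fin (n f) → ℝ)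
    (hymem : ∀ f i, y f i ∈ Set.Icc (a f.castSucc) (a f.succ))
    (hyinj : ∀ f, Function.Injective (y f))
    (ω : (f : Fin F) → Fin (n f) → ℝ) (hω : ∀ f i, 0 < ω f i)
    (τ : Fin F → ℕ)
    (hquad : ∀ (f : Fin F) (q : Polynomial ℝ), q.natDegree ≤ τ f →
      ∑ i, ω f i * q.eval (y f i) = ∫ t in (a f.castSucc)..(a f.succ), q.eval t)
    (ωL : Fin nL → ℝ) (hωL : ∀ k, 0 < ωL k)
    (ILR : (f : Fin F) → Matrix (Fin (n f)) (Fin nL) ℝ)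
    (hILR : ∀ f, ILR f *ᵥ (fun _ => (1 : ℝ)) = fun _ => (1 : ℝ))
    (IRL : (f : Fin F) → Matrix (Fin nL) (Fin (n f)) ℝ)
    (hIRL : ∀ f, IRL f = (Matrix.diagonal ωL)⁻¹ * (ILR f)ᵀ * Matrix.diagonal (ω f))
    (g : Polynomial ℝ) (hg : ∀ f, g.natDegree ≤ τ f) :
    (fun _ => (1 : ℝ)) ⬝ᵥ
        (Matrix.diagonal ωL *ᵥ ∑ f, (IRL f) *ᵥ (fun i => g.eval (y f i)))
      = ∫ t in (a 0)..(a (Fin.last F)), g.eval t := by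
  have hDet : IsUnit (Matrix.diagonal ωL).det := by
    rw [Matrix.det_diagonal]
    exact (Finset.prod_pos fun k _ => hωL k).ne'.isUnit
  have key : ∀ f : Fin F,
      (fun _ => (1 : ℝ)) ⬝ᵥ (Matrix.diagonal ωL *ᵥ (IRL f *ᵥ (fun i => g.eval (y f i))))
        = ∫ t in (a f.castSucc)..(a f.succ), g.eval t := by
    intro f
    rw [hIRL f, Matrix.mulVec_mulVec, ← Matrix.mul_assoc, ← Matrix.mul_assoc,
      Matrix.mul_nonsing_inv _ hDet, Matrix.one_mul,
      ← Matrix.mulVec_mulVec, Matrix.dotProduct_mulVec, Matrix.vecMul_transpose, hILR f,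
      ← hquad f g (hg f)]
    simp [dotProduct, Matrix.mulVec, Matrix.diagonal_apply, Finset.mul_sum]
  have hmv : Matrix.diagonal ωL *ᵥ (∑ f, IRL f *ᵥ (fun i => g.eval (y f i)))
      = ∑ f, Matrix.diagonal ωL *ᵥ (IRL f *ᵥ (fun i => g.eval (y f i))) := by
    simpa only [Matrix.mulVecLin_apply] using map_sum (Matrix.mulVecLin (Matrix.diagonal ωL))
      (fun f => IRL f *ᵥ (fun i => g.eval (y f i))) Finset.univ
  have hdp : (fun _ => (1 : ℝ)) ⬝ᵥ (∑ f, Matrix.diagonal ωL *ᵥ (IRL f *ᵥ (fun i => g.eval (y f i))))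
      = ∑ f, (fun _ => (1 : ℝ)) ⬝ᵥ (Matrix.diagonal ωL *ᵥ (IRL f *ᵥ (fun i => g.eval (y f i)))) := by
    simp only [dotProduct, Finset.sum_apply, Finset.mul_sum]
    exact Finset.sum_comm
  rw [hmv, hdp]
  simp only [key]
  -- telescoping sum of adjacent interval integrals
  set A : ℕ → ℝ := fun k => a ⟨min k F, Nat.lt_succ_of_le (min_le_right _ _)⟩ with hA
  have hint : ∀ k < F, IntervalIntegrable (fun t => g.eval t) volume (A k) (A (k+1)) :=
    fun k _ => (g.continuous_aeval).intervalIntegrable _ _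
  have := intervalIntegral.sum_integral_adjacent_intervals (a := A) hint
  have hF0 : A 0 = a 0 := by simp [hA]
  have hFl : A F = a (Fin.last F) := by simp [hA, Fin.last]
  have hsum : ∑ k ∈ Finset.range F, (∫ t in A k..A (k+1), g.eval t)
      = ∑ f : Fin F, ∫ t in (a f.castSucc)..(a f.succ), g.eval t := by
    rw [← Fin.sum_univ_eq_sum_range]
    refine Finset.sum_congr rfl fun f _ => ?_
    have h1 : A f.val = a f.castSucc := by
      simp only [hA]
      congr 1
      exact Fin.ext (Nat.min_eq_left f.isLt.le)
    have h2 : A (f.val + 1) = a f.succ := by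
      simp only [hA]
      congr 1
      exact Fin.ext (Nat.min_eq_left f.isLt)
    rw [h1, h2]
  rw [← hsum, sum_integral_adjacent_intervals hint, hF0, hFl]
end

section
/- Let F be a positive integer and for f = 1, …, F let n_f be positive integers; let P_L be a real n_L × n_L matrix, and for each f let P_{R_f} be a real n_f × n_f matrix, B_f a real n_f × n_f matrix such that P_{R_f} B_f is symmetric positive semidefinite, I_{LR}^f a real n_f × n_L matrix and I_{RL}^f a real n_L × n_f matrix satisfying P_L I_{RL}^f = (I_{LR}^f)ᵀ P_{R_f}. Then for all vectors w_L ∈ ℝ^{n_L} and w_f ∈ ℝ^{n_f} (f = 1, …, F), w_Lᵀ P_L Σ_{f=1}^F I_{RL}^f B_f ( I_{LR}^f w_L − w_f ) + Σ_{f=1}^F w_fᵀ P_{R_f} B_f ( w_f − I_{LR}^f w_L ) = Σ_{f=1}^F ( I_{LR}^f w_L − w_f )ᵀ P_{R_f} B_f ( I_{LR}^f w_L − w_f ) ≥ 0. Consequently, the total contribution of the interface dissipation simultaneous-approximation-terms to the discrete entropy rate, which is the negative of the left-hand side, is nonpositive, so the dissipation terms are entropy stable. -/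
open Matrix

/-! The adjoint relation `P_L I_{RL} = I_{LR}ᵀ P_R` moves the coarse-side penalty of each face
onto the fine side, where together with the fine-side penalty it becomes the quadratic form of
`P_R B` in the interface jump `I_{LR} w_L - w`. Each such form is nonnegative since `P_R B` is
positive semidefinite. -/

namespace Matrix

variable {l m R : Type*} [Fintype l] [Fintype m]

theorem dotProduct_mulVec_mulVec_of_mul_eq_transpose_mul [CommSemiring R]
    {PL : Matrix l l R} {PR : Matrix m m R} {IRL : Matrix l m R} {ILR : Matrix m l R}
    (hadj : PL * IRL = ILRᵀ * PR) (u : l → R) (v : m → R) :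
    u ⬝ᵥ (PL *ᵥ (IRL *ᵥ v)) = (ILR *ᵥ u) ⬝ᵥ (PR *ᵥ v) := by
  rw [mulVec_mulVec, hadj, ← mulVec_mulVec, dotProduct_mulVec, vecMul_transpose]

theorem interface_penalty_eq_jump_form [CommRing R]
    {PL : Matrix l l R} {PR B : Matrix m m R} {IRL : Matrix l m R} {ILR : Matrix m l R}
    (hadj : PL * IRL = ILRᵀ * PR) (wL : l → R) (w : m → R) :
    wL ⬝ᵥ (PL *ᵥ (IRL *ᵥ (B *ᵥ (ILR *ᵥ wL - w)))) + w ⬝ᵥ (PR *ᵥ (B *ᵥ (w - ILR *ᵥ wL)))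
      = (ILR *ᵥ wL - w) ⬝ᵥ (PR *ᵥ (B *ᵥ (ILR *ᵥ wL - w))) := by
  rw [dotProduct_mulVec_mulVec_of_mul_eq_transpose_mul hadj, ← neg_sub (ILR *ᵥ wL) w,
    mulVec_neg, mulVec_neg, dotProduct_neg, sub_dotProduct]
  ring

theorem PosSemidef.dotProduct_mulVec_mulVec_nonneg [CommRing R] [PartialOrder R] [StarRing R]
    [TrivialStar R] {P B : Matrix m m R} (hPB : (P * B).PosSemidef) (v : m → R) :
    0 ≤ v ⬝ᵥ (P *ᵥ (B *ᵥ v)) := by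
  simpa only [star_trivial, mulVec_mulVec] using hPB.dotProduct_mulVec_nonneg v

end Matrix

theorem interface_dissipation_entropy_stable_general
    (F nL : ℕ) (n : Fin F → ℕ)
    (PL : Matrix (Fin nL) (Fin nL) ℝ)
    (PR : (f : Fin F) → Matrix (Fin (n f)) (Fin (n f)) ℝ)
    (B : (f : Fin F) → Matrix (Fin (n f)) (Fin (n f)) ℝ)
    (hPB : ∀ f, (PR f * B f).PosSemidef)
    (ILR : (f : Fin F) → Matrix (Fin (n f)) (Fin nL) ℝ)
    (IRL : (f : Fin F) → Matrix (Fin nL) (Fin (n f)) ℝ)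
    (hadj : ∀ f, PL * IRL f = (ILR f)ᵀ * PR f)
    (wL : Fin nL → ℝ) (w : (f : Fin F) → Fin (n f) → ℝ) :
    wL ⬝ᵥ (PL *ᵥ ∑ f, (IRL f) *ᵥ ((B f) *ᵥ ((ILR f) *ᵥ wL - w f)))
        + ∑ f, (w f) ⬝ᵥ ((PR f) *ᵥ ((B f) *ᵥ (w f - (ILR f) *ᵥ wL)))
      = ∑ f, ((ILR f) *ᵥ wL - w f) ⬝ᵥ
          ((PR f) *ᵥ ((B f) *ᵥ ((ILR f) *ᵥ wL - w f))) ∧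
    0 ≤ ∑ f, ((ILR f) *ᵥ wL - w f) ⬝ᵥ
          ((PR f) *ᵥ ((B f) *ᵥ ((ILR f) *ᵥ wL - w f))) := by
  refine ⟨?_, Finset.sum_nonneg fun f _ ↦ (hPB f).dotProduct_mulVec_mulVec_nonneg _⟩
  rw [mulVec_sum, dotProduct_sum, ← Finset.sum_add_distrib]
  exact Finset.sum_congr rfl fun f _ ↦ interface_penalty_eq_jump_form (hadj f) wL (w f)

/-- Entropy stability of the interface dissipation SATs at an h/p-nonconforming
interface: contracting the dissipative penalty terms with the entropy variables yields a
sum of quadratic forms in the interface jumps with positive semidefinite matrices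
P_{R_f} B_f, hence a nonnegative quantity; its negative (the contribution to the
discrete entropy rate) is nonpositive. -/
theorem interface_dissipation_entropy_stable
    (F nL : ℕ) (hF : 0 < F) (n : Fin F → ℕ)
    (PL : Matrix (Fin nL) (Fin nL) ℝ)
    (PR : (f : Fin F) → Matrix (Fin (n f)) (Fin (n f)) ℝ)
    (B : (f : Fin F) → Matrix (Fin (n f)) (Fin (n f)) ℝ)
    (hPB : ∀ f, (PR f * B f).PosSemidef)
    (ILR : (f : Fin F) → Matrix (Fin (n f)) (Fin nL) ℝ)
    (IRL : (f : Fin F) → Matrix (Fin nL) (Fin (n f)) ℝ)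
    (hadj : ∀ f, PL * IRL f = (ILR f)ᵀ * PR f)
    (wL : Fin nL → ℝ) (w : (f : Fin F) → Fin (n f) → ℝ) :
    wL ⬝ᵥ (PL *ᵥ ∑ f, (IRL f) *ᵥ ((B f) *ᵥ ((ILR f) *ᵥ wL - w f)))
        + ∑ f, (w f) ⬝ᵥ ((PR f) *ᵥ ((B f) *ᵥ (w f - (ILR f) *ᵥ wL)))
      = ∑ f, ((ILR f) *ᵥ wL - w f) ⬝ᵥ
          ((PR f) *ᵥ ((B f) *ᵥ ((ILR f) *ᵥ wL - w f))) ∧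
    0 ≤ ∑ f, ((ILR f) *ᵥ wL - w f) ⬝ᵥ
          ((PR f) *ᵥ ((B f) *ᵥ ((ILR f) *ᵥ wL - w f))) :=
  interface_dissipation_entropy_stable_general F nL n PL PR B hPB ILR IRL hadj wL w
end

section
/- Let F be a positive integer and for f = 1, …, F let n_f be positive integers; let P_L be a real n_L × n_L matrix, and for each f let P_{R_f} be a real n_f × n_f matrix, B_f a real n_f × n_f matrix, I_{LR}^f a real n_f × n_L matrix with I_{LR}^f 1_{n_L} = 1_{n_f}, and I_{RL}^f a real n_L × n_f matrix satisfying P_L I_{RL}^f = (I_{LR}^f)ᵀ P_{R_f}. Then for all vectors w_L ∈ ℝ^{n_L} and w_f ∈ ℝ^{n_f} (f = 1, …, F), 1_{n_L}ᵀ P_L Σ_{f=1}^F I_{RL}^f B_f ( I_{LR}^f w_L − w_f ) + Σ_{f=1}^F 1_{n_f}ᵀ P_{R_f} B_f ( w_f − I_{LR}^f w_L ) = 0; that is, the interface dissipation simultaneous-approximation-terms have no impact on element-wise conservation. -/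
open Matrix

/-- Conservation of the interface dissipation SATs at an h/p-nonconforming interface:
if the interpolation operators I_{L→R_f} are consistent and I_{R→L}^f are their
SBP-preserving adjoints, then contracting the dissipative penalty terms of all elements
with the constant vector yields zero, so the dissipation terms have no impact on
element-wise conservation. -/
theorem interface_dissipation_conservative
    (F nL : ℕ) (hF : 0 < F) (n : Fin F → ℕ)
    (PL : Matrix (Fin nL) (Fin nL) ℝ)
    (PR : (f : Fin F) → Matrix (Fin (n f)) (Fin (n f)) ℝ)
    (B : (f : Fin F) → Matrix (Fin (n f)) (Fin (n f)) ℝ)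
    (ILR : (f : Fin F) → Matrix (Fin (n f)) (Fin nL) ℝ)
    (hcons : ∀ f, ILR f *ᵥ (fun _ => (1 : ℝ)) = fun _ => (1 : ℝ))
    (IRL : (f : Fin F) → Matrix (Fin nL) (Fin (n f)) ℝ)
    (hadj : ∀ f, PL * IRL f = (ILR f)ᵀ * PR f)
    (wL : Fin nL → ℝ) (w : (f : Fin F) → Fin (n f) → ℝ) :
    (fun _ => (1 : ℝ)) ⬝ᵥ (PL *ᵥ ∑ f, (IRL f) *ᵥ ((B f) *ᵥ ((ILR f) *ᵥ wL - w f)))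
        + ∑ f, (fun _ => (1 : ℝ)) ⬝ᵥ ((PR f) *ᵥ ((B f) *ᵥ (w f - (ILR f) *ᵥ wL)))
      = 0 := by
  have key : ∀ f : Fin F,
      (fun _ => (1 : ℝ)) ⬝ᵥ (PL *ᵥ ((IRL f) *ᵥ ((B f) *ᵥ ((ILR f) *ᵥ wL - w f))))
        = (fun _ => (1 : ℝ)) ⬝ᵥ ((PR f) *ᵥ ((B f) *ᵥ ((ILR f) *ᵥ wL - w f))) := by
    intro f
    calc (fun _ => (1 : ℝ)) ⬝ᵥ (PL *ᵥ ((IRL f) *ᵥ ((B f) *ᵥ ((ILR f) *ᵥ wL - w f))))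
        = (fun _ => (1 : ℝ)) ⬝ᵥ ((PL * IRL f) *ᵥ ((B f) *ᵥ ((ILR f) *ᵥ wL - w f))) := by
          rw [mulVec_mulVec]
      _ = (fun _ => (1 : ℝ)) ⬝ᵥ (((ILR f)ᵀ * PR f) *ᵥ ((B f) *ᵥ ((ILR f) *ᵥ wL - w f))) := by
          rw [hadj f]
      _ = ((ILR f) *ᵥ (fun _ => (1 : ℝ))) ⬝ᵥ ((PR f) *ᵥ ((B f) *ᵥ ((ILR f) *ᵥ wL - w f))) := by
          rw [← mulVec_mulVec, dotProduct_mulVec, vecMul_transpose]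
      _ = (fun _ => (1 : ℝ)) ⬝ᵥ ((PR f) *ᵥ ((B f) *ᵥ ((ILR f) *ᵥ wL - w f))) := by
          rw [hcons f]
  have hmv : PL *ᵥ (∑ f, (IRL f) *ᵥ ((B f) *ᵥ ((ILR f) *ᵥ wL - w f)))
      = ∑ f, PL *ᵥ ((IRL f) *ᵥ ((B f) *ᵥ ((ILR f) *ᵥ wL - w f))) :=
    map_sum PL.mulVecLin _ Finset.univ
  have hdp : ∀ (u : Fin F → Fin nL → ℝ),
      (fun _ => (1 : ℝ)) ⬝ᵥ (∑ f, u f) = ∑ f, (fun _ => (1 : ℝ)) ⬝ᵥ u f := by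
    intro u
    simp only [dotProduct, Finset.sum_apply, one_mul]
    rw [Finset.sum_comm]
  rw [hmv, hdp, ← Finset.sum_add_distrib]
  refine Finset.sum_eq_zero fun f _ => ?_
  rw [key f]
  have h2 : w f - (ILR f) *ᵥ wL = -((ILR f) *ᵥ wL - w f) := by abel
  rw [h2, mulVec_neg, mulVec_neg, dotProduct_neg]
  ring
end
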